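/- arXiv:1108.2816 — 3 statements merged into one kernel-verified Lean document; each statement's English description precedes it below -/
import Mathlib

section
/- Directed information is bounded by mutual information: for jointly distributed random vectors X^n = (X_1,...,X_n) and Y^n = (Y_1,...,Y_n), I(X^n → Y^n) := Σ_{i=1}^n I(X^i; Y_i | Y^{i-1}) satisfies I(X^n → Y^n) ≤ I(X^n; Y^n). -/
/-!
By the chain rule, `I(Xⁿ; Yⁿ) = Σᵢ I(Xⁿ; Yᵢ | Yⁱ⁻¹)`, so the bound holds term by term: `Xⁱ` is a
function of `Xⁿ`, and `I(Xⁿ; Yᵢ | Yⁱ⁻¹) - I(Xⁱ; Yᵢ | Yⁱ⁻¹) = I(Xⁿ; Yᵢ | Xⁱ, Yⁱ⁻¹) ≥ 0`.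
Nonnegativity of conditional mutual information is submodularity of entropy; for each value of
the conditioning variable it is the subadditivity of entropy, which follows from `log x ≤ x - 1`.
-/

/-- Probability that a finite-valued random variable `X` on a finite probability space with
weights `p` takes the value `a`. -/
noncomputable def prob {Ω α : Type*} [Fintype Ω] [DecidableEq α]
    (p : Ω → ℝ) (X : Ω → α) (a : α) : ℝ :=
  ∑ ω ∈ Finset.univ.filter (fun ω => X ω = a), p ω

/-- Shannon entropy `H(X)` (base e). -/
noncomputable def entH {Ω α : Type*} [Fintype Ω] [Fintype α] [DecidableEq α]
    (p : Ω → ℝ) (X : Ω → α) : ℝ :=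
  ∑ a, Real.negMulLog (prob p X a)

/-- Conditional entropy `H(X | Y) = H(X, Y) − H(Y)`. -/
noncomputable def condEnt {Ω α β : Type*} [Fintype Ω] [Fintype α] [Fintype β]
    [DecidableEq α] [DecidableEq β] (p : Ω → ℝ) (X : Ω → α) (Y : Ω → β) : ℝ :=
  entH p (fun ω => (X ω, Y ω)) - entH p Y

/-- Mutual information `I(X; Y) = H(X) + H(Y) − H(X, Y)`. -/
noncomputable def mutInfo {Ω α β : Type*} [Fintype Ω] [Fintype α] [Fintype β]
    [DecidableEq α] [DecidableEq β] (p : Ω → ℝ) (X : Ω → α) (Y : Ω → β) : ℝ :=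
  entH p X + entH p Y - entH p (fun ω => (X ω, Y ω))

/-- Conditional mutual information `I(X; Y | V) = H(X|V) + H(Y|V) − H(X,Y|V)`. -/
noncomputable def condMutInfo {Ω α β γ : Type*} [Fintype Ω] [Fintype α] [Fintype β] [Fintype γ]
    [DecidableEq α] [DecidableEq β] [DecidableEq γ]
    (p : Ω → ℝ) (X : Ω → α) (Y : Ω → β) (V : Ω → γ) : ℝ :=
  condEnt p X V + condEnt p Y V - condEnt p (fun ω => (X ω, Y ω)) V


open Real Finset

lemma sub_mul_div_le_mul_log {m r s t : ℝ} (hm : 0 ≤ m) (hmr : m ≤ r) (hms : m ≤ s)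
    (hrt : r ≤ t) : m - r * s / t ≤ m * log m + m * log t - m * log r - m * log s := by
  rcases hm.eq_or_lt with rfl | hm
  · simpa using div_nonneg (mul_nonneg hmr hms) (hmr.trans hrt)
  have hr : 0 < r := hm.trans_le hmr
  have hs : 0 < s := hm.trans_le hms
  have ht : 0 < t := hr.trans_le hrt
  have key : m * log (r * s / (m * t)) ≤ r * s / t - m :=
    calc m * log (r * s / (m * t)) ≤ m * (r * s / (m * t) - 1) :=
          mul_le_mul_of_nonneg_left (log_le_sub_one_of_pos (by positivity)) hm.le
      _ = r * s / t - m := by field_simp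
  rw [log_div (by positivity) (by positivity), log_mul hr.ne' hs.ne',
    log_mul hm.ne' ht.ne'] at key
  linarith

/-- Subadditivity of entropy, for an unnormalised joint distribution `m`. -/
theorem sum_sum_negMulLog_add_negMulLog_sum_le {ι κ : Type*} [Fintype ι] [Fintype κ]
    (m : ι → κ → ℝ) (hm : ∀ i j, 0 ≤ m i j) :
    ∑ i, ∑ j, negMulLog (m i j) + negMulLog (∑ i, ∑ j, m i j) ≤
      ∑ i, negMulLog (∑ j, m i j) + ∑ j, negMulLog (∑ i, m i j) := by
  let r i := ∑ j, m i j
  let s j := ∑ i, m i j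
  let t := ∑ i, r i
  have hmr i j : m i j ≤ r i := single_le_sum (fun j _ => hm i j) (mem_univ j)
  have hms i j : m i j ≤ s j := single_le_sum (fun i _ => hm i j) (mem_univ i)
  have hrt i : r i ≤ t := single_le_sum (fun i _ => sum_nonneg fun j _ => hm i j) (mem_univ i)
  have hst : ∑ j, s j = t := sum_comm
  have gibbs : ∑ i, ∑ j, (m i j - r i * s j / t) ≤
      ∑ i, ∑ j, (m i j * log (m i j) + m i j * log t - m i j * log (r i) - m i j * log (s j)) :=
    sum_le_sum fun i _ => sum_le_sum fun j _ =>
      sub_mul_div_le_mul_log (hm i j) (hmr i j) (hms i j) (hrt i)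
  have hlhs : ∑ i, ∑ j, (m i j - r i * s j / t) = 0 := by
    simp only [sum_sub_distrib, ← sum_div, ← Fintype.sum_mul_sum, hst]
    exact sub_eq_zero.2 (mul_self_div_self t).symm
  have ht : ∑ i, ∑ j, m i j * log t = t * log t := by simp only [← sum_mul]; rfl
  have hr : ∑ i, ∑ j, m i j * log (r i) = ∑ i, r i * log (r i) := by simp only [← sum_mul]; rfl
  have hs : ∑ i, ∑ j, m i j * log (s j) = ∑ j, s j * log (s j) := by
    rw [sum_comm]; simp only [← sum_mul]; rfl
  simp only [sum_sub_distrib, sum_add_distrib, ht, hr, hs] at gibbs hlhs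
  show ∑ i, ∑ j, negMulLog (m i j) + negMulLog t ≤ ∑ i, negMulLog (r i) + ∑ j, negMulLog (s j)
  simp only [negMulLog_eq_neg, sum_neg_distrib]
  linarith

section Entropy

variable {Ω α β : Type*} [Fintype Ω] (p : Ω → ℝ) [DecidableEq β]

lemma prob_comp_eq_zero {f : α → β} {b : β} (hb : b ∉ Set.range f) (X : Ω → α) :
    prob p (fun ω => f (X ω)) b = 0 :=
  sum_eq_zero fun ω hω => absurd ⟨X ω, (mem_filter.1 hω).2⟩ hb

variable [DecidableEq α]

lemma prob_nonneg (hp : ∀ ω, 0 ≤ p ω) (X : Ω → α) (a : α) : 0 ≤ prob p X a :=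
  sum_nonneg fun ω _ => hp ω

lemma prob_congr {X : Ω → α} {Y : Ω → β} {a : α} {b : β} (h : ∀ ω, X ω = a ↔ Y ω = b) :
    prob p X a = prob p Y b := by
  simp only [prob, h]

lemma prob_eq_sum_prob_prod [Fintype β] (X : Ω → α) (Y : Ω → β) (a : α) :
    prob p X a = ∑ b, prob p (fun ω => (X ω, Y ω)) (a, b) := by
  simp only [prob, sum_filter, Prod.mk.injEq, ite_and]
  rw [sum_comm]
  simp

variable [Fintype α] [Fintype β]

lemma entH_comp_of_injective {f : α → β} (hf : f.Injective) (X : Ω → α) :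
    entH p (fun ω => f (X ω)) = entH p X := by
  refine (Fintype.sum_of_injective f hf _ _ (fun b hb => ?_) fun a => ?_).symm
  · rw [prob_comp_eq_zero p hb, negMulLog_zero]
  · rw [prob_congr p fun ω => hf.eq_iff.symm]

lemma entH_congr_of_injective {X : Ω → α} {Y : Ω → β} (f : α → β) (hf : f.Injective)
    (h : ∀ ω, Y ω = f (X ω)) : entH p Y = entH p X := by
  rw [← entH_comp_of_injective p hf X, funext h]

lemma entH_of_subsingleton [Unique α] (hp1 : ∑ ω, p ω = 1) (X : Ω → α) : entH p X = 0 := by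
  rw [entH, Fintype.sum_unique, prob, filter_true_of_mem fun ω _ => Subsingleton.elim _ _, hp1,
    negMulLog_one]

end Entropy

section Information

variable {Ω α β γ : Type*} [Fintype Ω] [Fintype α] [Fintype β] [Fintype γ]
  [DecidableEq α] [DecidableEq β] [DecidableEq γ] (p : Ω → ℝ)

theorem condMutInfo_nonneg (hp : ∀ ω, 0 ≤ p ω) (X : Ω → α) (Y : Ω → β) (V : Ω → γ) :
    0 ≤ condMutInfo p X Y V := by
  let q c a b := prob p (fun ω => ((X ω, Y ω), V ω)) ((a, b), c)
  have hXV a c : prob p (fun ω => (X ω, V ω)) (a, c) = ∑ b, q c a b := by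
    rw [prob_eq_sum_prob_prod p _ Y]
    exact sum_congr rfl fun b _ => prob_congr p fun ω => by simp only [Prod.mk.injEq]; tauto
  have hYV b c : prob p (fun ω => (Y ω, V ω)) (b, c) = ∑ a, q c a b := by
    rw [prob_eq_sum_prob_prod p _ X]
    exact sum_congr rfl fun a _ => prob_congr p fun ω => by simp only [Prod.mk.injEq]; tauto
  have hV c : prob p V c = ∑ a, ∑ b, q c a b := by
    rw [prob_eq_sum_prob_prod p _ fun ω => (X ω, Y ω), Fintype.sum_prod_type]
    exact sum_congr rfl fun a _ => sum_congr rfl fun b _ =>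
      prob_congr p fun ω => by simp only [Prod.mk.injEq]; tauto
  have submod := sum_le_sum fun c (_ : c ∈ univ) =>
    sum_sum_negMulLog_add_negMulLog_sum_le (q c) fun a b => prob_nonneg p hp _ _
  simp only [sum_add_distrib] at submod
  simp only [condMutInfo, condEnt, entH, Fintype.sum_prod_type, hXV, hYV, hV]
  have hXV' : ∑ a, ∑ c, negMulLog (∑ b, q c a b) = ∑ c, ∑ a, negMulLog (∑ b, q c a b) :=
    sum_comm
  have hYV' : ∑ b, ∑ c, negMulLog (∑ a, q c a b) = ∑ c, ∑ b, negMulLog (∑ a, q c a b) :=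
    sum_comm
  have hXYV : ∑ a, ∑ b, ∑ c, negMulLog (q c a b) = ∑ c, ∑ a, ∑ b, negMulLog (q c a b) :=
    (sum_congr rfl fun a _ => sum_comm).trans sum_comm
  linarith

/-- The gap is `I(X; Y | g X, V) ≥ 0`. -/
theorem condMutInfo_comp_le {α' : Type*} [Fintype α'] [DecidableEq α'] (hp : ∀ ω, 0 ≤ p ω)
    (g : α → α') (X : Ω → α) (Y : Ω → β) (V : Ω → γ) :
    condMutInfo p (fun ω => g (X ω)) Y V ≤ condMutInfo p X Y V := by
  have hX : entH p (fun ω => (X ω, (g (X ω), V ω))) = entH p (fun ω => (X ω, V ω)) :=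
    entH_congr_of_injective p (fun z => (z.1, (g z.1, z.2)))
      (fun z w h => by simp_all [Prod.ext_iff]) fun _ => rfl
  have hY : entH p (fun ω => (Y ω, (g (X ω), V ω))) = entH p (fun ω => ((g (X ω), Y ω), V ω)) :=
    entH_congr_of_injective p (fun z => (z.1.2, (z.1.1, z.2)))
      (fun z w h => by simp_all [Prod.ext_iff]) fun _ => rfl
  have hXY : entH p (fun ω => ((X ω, Y ω), (g (X ω), V ω))) =
      entH p (fun ω => ((X ω, Y ω), V ω)) :=
    entH_congr_of_injective p (fun z => (z.1, (g z.1.1, z.2)))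
      (fun z w h => by simp_all [Prod.ext_iff]) fun _ => rfl
  have := condMutInfo_nonneg p hp X Y fun ω => (g (X ω), V ω)
  simp only [condMutInfo, condEnt, hX, hY, hXY] at this ⊢
  linarith

theorem mutInfo_prod_eq_add_condMutInfo (X : Ω → α) (Y : Ω → β) (Z : Ω → γ) :
    mutInfo p X (fun ω => (Y ω, Z ω)) = mutInfo p X Z + condMutInfo p X Y Z := by
  have hXYZ : entH p (fun ω => (X ω, (Y ω, Z ω))) = entH p (fun ω => ((X ω, Y ω), Z ω)) :=
    entH_congr_of_injective p (Equiv.prodAssoc α β γ) (Equiv.injective _) fun _ => rfl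
  simp only [mutInfo, condMutInfo, condEnt, hXYZ]
  ring

theorem mutInfo_comp_right_of_injective {f : β → γ} (hf : f.Injective) (X : Ω → α)
    (Y : Ω → β) : mutInfo p X (fun ω => f (Y ω)) = mutInfo p X Y := by
  have hXY : entH p (fun ω => (X ω, f (Y ω))) = entH p (fun ω => (X ω, Y ω)) :=
    entH_congr_of_injective p (Prod.map id f) (Function.injective_id.prodMap hf) fun _ => rfl
  rw [mutInfo, mutInfo, hXY, entH_comp_of_injective p hf]

theorem mutInfo_of_subsingleton_right [Unique β] (hp1 : ∑ ω, p ω = 1) (X : Ω → α)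
    (Y : Ω → β) : mutInfo p X Y = 0 := by
  have hXY : entH p (fun ω => (X ω, Y ω)) = entH p X :=
    entH_congr_of_injective p (fun x => (x, default)) (fun _ _ h => congrArg Prod.fst h)
      fun ω => Prod.ext rfl (Subsingleton.elim _ _)
  rw [mutInfo, hXY, entH_of_subsingleton p hp1 Y, add_zero, sub_self]

theorem mutInfo_eq_sum_condMutInfo (hp1 : ∑ ω, p ω = 1) (X : Ω → α) :
    ∀ {n : ℕ} (Y : Fin n → Ω → β), mutInfo p X (fun ω i => Y i ω) =
      ∑ i : Fin n, condMutInfo p X (Y i) fun ω (j : Fin i.1) => Y ⟨j, j.isLt.trans i.isLt⟩ ω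
  | 0, Y => by rw [mutInfo_of_subsingleton_right p hp1, Fin.sum_univ_zero]
  | n + 1, Y => by
    have h_snoc : mutInfo p X (fun ω i => Y i ω) =
        mutInfo p X (fun ω => (Y (Fin.last n) ω, fun i : Fin n => Y i.castSucc ω)) := by
      rw [← mutInfo_comp_right_of_injective p (Fin.snocEquiv fun _ => β).injective]
      congr 1
      funext ω i
      refine Fin.lastCases ?_ (fun j => ?_) i <;> simp
    rw [h_snoc, mutInfo_prod_eq_add_condMutInfo, Fin.sum_univ_castSucc,
      mutInfo_eq_sum_condMutInfo hp1 X]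
    rfl

end Information

/-- Directed information is bounded by mutual information:
`I(Xⁿ → Yⁿ) = Σᵢ I(Xⁱ; Yᵢ | Yⁱ⁻¹) ≤ I(Xⁿ; Yⁿ)`. -/
theorem stmt7 {Ω 𝓧 𝓨 : Type*} [Fintype Ω] [Fintype 𝓧] [Fintype 𝓨]
    [DecidableEq 𝓧] [DecidableEq 𝓨]
    (p : Ω → ℝ) (hp : ∀ ω, 0 ≤ p ω) (hp1 : ∑ ω, p ω = 1)
    (n : ℕ) (X : Fin n → Ω → 𝓧) (Y : Fin n → Ω → 𝓨) :
    ∑ i : Fin n,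
        condMutInfo p
          (fun ω => fun j : Fin (i.1 + 1) => X (Fin.castLE i.isLt j) ω)
          (Y i)
          (fun ω => fun j : Fin i.1 => Y ⟨j.1, j.isLt.trans i.isLt⟩ ω) ≤
      mutInfo p (fun ω => fun i => X i ω) (fun ω => fun i => Y i ω) := by
  rw [mutInfo_eq_sum_condMutInfo p hp1]
  -- without the ascription `(… :)`, unifying against the goal unfolds `condMutInfo` and times out
  exact sum_le_sum fun i _ =>
    (condMutInfo_comp_le p hp (fun x (j : Fin (i.1 + 1)) => x (Fin.castLE i.isLt j))
      (fun ω i => X i ω) (Y i) fun ω (j : Fin i.1) => Y ⟨j, j.isLt.trans i.isLt⟩ ω :)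
end

section
/- The noisy-feedback achievable rate is at most the ideal-feedback objective with the noisy power constraint: for any strictly lower triangular B, positive semidefinite K_s, and positive definite K_w, K_v, log[det((I+B)K_w(I+B)ᵀ + B K_v Bᵀ + K_s)/det((I+B)K_w(I+B)ᵀ + B K_v Bᵀ)] ≤ log[det((I+B)K_w(I+B)ᵀ + K_s)/det K_w]. -/
/-!
Write `S = RᴴR`. The matrix determinant lemma gives `det (X + S) / det X = det (1 + R X⁻¹ Rᴴ)`,
and since inversion is antitone (Woodbury) and the determinant monotone on positive definite
matrices, this ratio is antitone in `X`. Apply it to `A ≤ A + C` with `A = (1 + B) K_w (1 + B)ᵀ`,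
whose determinant is `det K_w` because `1 + B` is unit lower triangular.
-/

open Matrix

open scoped MatrixOrder ComplexOrder

namespace Matrix

variable {m : Type*} [Fintype m] [DecidableEq m]

theorem det_one_add_eq_one_of_strictLowerTriangular {R : Type*} [CommRing R] [LinearOrder m]
    {B : Matrix m m R} (hB : ∀ i j, i ≤ j → B i j = 0) : (1 + B).det = 1 := by
  rw [det_of_isLowerTriangular _ fun i j hij ↦ by
    simp [one_apply_ne (show i < j from hij).ne, hB i j (show i < j from hij).le]]
  exact Finset.prod_eq_one fun i _ ↦ by simp [hB i i le_rfl]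

section RCLike

variable {𝕜 : Type*} [RCLike 𝕜]

theorem PosSemidef.exists_eq_conjTranspose_mul_self {S : Matrix m m 𝕜} (hS : S.PosSemidef) :
    ∃ R : Matrix m m 𝕜, S = Rᴴ * R :=
  CStarAlgebra.nonneg_iff_eq_star_mul_self.mp hS.nonneg

theorem PosDef.inv_le_inv {A B : Matrix m m 𝕜} (hA : A.PosDef) (hAB : A ≤ B) : B⁻¹ ≤ A⁻¹ := by
  obtain ⟨Q, hQ⟩ := (le_iff.mp hAB).exists_eq_conjTranspose_mul_self
  obtain rfl : B = A + Qᴴ * 1 * Q := by rw [mul_one, ← hQ, add_sub_cancel]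
  have hG : (1 + Q * A⁻¹ * Qᴴ).PosDef :=
    PosDef.one.add_posSemidef (hA.inv.posSemidef.mul_mul_conjTranspose_same Q)
  rw [le_iff, add_mul_mul_inv_eq_sub A Qᴴ 1 Q hA.isUnit isUnit_one (by simpa using hG.isUnit),
    inv_one, sub_sub_cancel]
  convert hG.inv.posSemidef.conjTranspose_mul_mul_same (Q * A⁻¹) using 1
  simp only [conjTranspose_mul, hA.inv.isHermitian.eq, mul_assoc]

end RCLike

theorem one_le_det_one_add {D : Matrix m m ℝ} (hD : D.PosSemidef) : 1 ≤ (1 + D).det := by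
  have hH : (1 + D).IsHermitian := isHermitian_one.add hD.isHermitian
  rw [hH.det_eq_prod_eigenvalues]
  refine Finset.one_le_prod fun i _ ↦ ?_
  have hmem := hH.eigenvalues_mem_spectrum_real i
  rw [← sub_add_cancel (hH.eigenvalues i) 1, spectrum.add_mem_iff] at hmem
  exact sub_nonneg.mp (spectrum_nonneg_of_nonneg hD.nonneg (by simpa using hmem))

theorem PosDef.det_le_det {A B : Matrix m m ℝ} (hA : A.PosDef) (hAB : A ≤ B) :
    A.det ≤ B.det := by
  obtain ⟨R, hR⟩ := (le_iff.mp hAB).exists_eq_conjTranspose_mul_self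
  obtain rfl : B = A + Rᴴ * R := by rw [← hR, add_sub_cancel]
  rw [det_add_mul _ _ hA.det_pos.ne'.isUnit]
  exact le_mul_of_one_le_right hA.det_pos.le
    (one_le_det_one_add (hA.inv.posSemidef.mul_mul_conjTranspose_same R))

theorem PosDef.det_add_div_det_le {A B S : Matrix m m ℝ} (hA : A.PosDef) (hAB : A ≤ B)
    (hS : S.PosSemidef) : (B + S).det / B.det ≤ (A + S).det / A.det := by
  have hB : B.PosDef := by simpa using hA.add_posSemidef (le_iff.mp hAB)
  obtain ⟨R, rfl⟩ := hS.exists_eq_conjTranspose_mul_self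
  rw [det_add_mul _ _ hA.det_pos.ne'.isUnit, det_add_mul _ _ hB.det_pos.ne'.isUnit,
    mul_div_cancel_left₀ _ hB.det_pos.ne', mul_div_cancel_left₀ _ hA.det_pos.ne']
  refine PosDef.det_le_det ?_ (add_le_add_right (star_right_conjugate_le_conjugate
    (hA.inv_le_inv hAB) R) 1)
  exact PosDef.one.add_posSemidef (hB.inv.posSemidef.mul_mul_conjTranspose_same R)

end Matrix

theorem stmt17_general (n : ℕ) (Kw Kv Ks B : Matrix (Fin n) (Fin n) ℝ)
    (hKw : Kw.PosDef) (hKv : Kv.PosDef) (hKs : Ks.PosSemidef)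
    (hB : ∀ i j : Fin n, i ≤ j → B i j = 0) :
    Real.log (((1 + B) * Kw * (1 + B)ᵀ + B * Kv * Bᵀ + Ks).det /
        ((1 + B) * Kw * (1 + B)ᵀ + B * Kv * Bᵀ).det) ≤
      Real.log (((1 + B) * Kw * (1 + B)ᵀ + Ks).det / Kw.det) := by
  have hdet : (1 + B).det = 1 := det_one_add_eq_one_of_strictLowerTriangular hB
  have hA : ((1 + B) * Kw * (1 + B)ᵀ).PosDef :=
    (IsUnit.posDef_star_right_conjugate_iff (by simp [isUnit_iff_isUnit_det, hdet])).mpr hKw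
  have hC : (B * Kv * Bᵀ).PosSemidef := hKv.posSemidef.mul_mul_conjTranspose_same B
  have hAdet : ((1 + B) * Kw * (1 + B)ᵀ).det = Kw.det := by
    rw [det_mul, det_mul, det_transpose, hdet, one_mul, mul_one]
  have hAC : (1 + B) * Kw * (1 + B)ᵀ ≤ (1 + B) * Kw * (1 + B)ᵀ + B * Kv * Bᵀ := by
    simpa [le_iff] using hC
  have hAC_pos : ((1 + B) * Kw * (1 + B)ᵀ + B * Kv * Bᵀ).PosDef := hA.add_posSemidef hC
  rw [← hAdet]
  exact Real.log_le_log (div_pos (hAC_pos.add_posSemidef hKs).det_pos hAC_pos.det_pos)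
    (hA.det_add_div_det_le hAC hKs)

/-- The noisy-feedback rate formula is at most the ideal-feedback objective:
`log[det((I+B)K_w(I+B)ᵀ + B K_v Bᵀ + K_s)/det((I+B)K_w(I+B)ᵀ + B K_v Bᵀ)]
 ≤ log[det((I+B)K_w(I+B)ᵀ + K_s)/det K_w]`. -/
theorem stmt17 (n : ℕ) (Kw Kv Ks B : Matrix (Fin n) (Fin n) ℝ)
    (hKw_symm : Kw.IsSymm) (hKv_symm : Kv.IsSymm) (hKs_symm : Ks.IsSymm)
    (hKw : Kw.PosDef) (hKv : Kv.PosDef) (hKs : Ks.PosSemidef)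
    (hB : ∀ i j : Fin n, i ≤ j → B i j = 0) :
    Real.log (((1 + B) * Kw * (1 + B)ᵀ + B * Kv * Bᵀ + Ks).det /
        ((1 + B) * Kw * (1 + B)ᵀ + B * Kv * Bᵀ).det) ≤
      Real.log (((1 + B) * Kw * (1 + B)ᵀ + Ks).det / Kw.det) :=
  stmt17_general n Kw Kv Ks B hKw hKv hKs hB
end

section
/- For positive definite A, positive semidefinite C and positive semidefinite S (all symmetric n×n), det(A + C + S) · det A ≤ det(A + S) · det(A + C). -/
/-!
Write `C = W * W` with `W = √C`. For invertible `M`, `det (M + W * W) = det M * det (1 + W M⁻¹ W)`,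
so after dividing by `det (A + S) * det A` the inequality becomes
`det (1 + W (A + S)⁻¹ W) ≤ det (1 + W A⁻¹ W)`. This holds because inversion is antitone and the
determinant is monotone in the Loewner order on positive definite matrices.
-/

open Matrix
open scoped MatrixOrder ComplexOrder

namespace Matrix

variable {n : Type*} [Fintype n] [DecidableEq n]

theorem det_add_mul_self {R : Type*} [CommRing R] {P : Matrix n n R} (hP : IsUnit P.det)
    (W : Matrix n n R) : (P + W * W).det = P.det * (1 + W * P⁻¹ * W).det := by
  have : P + W * W = P * (1 + P⁻¹ * W * W) := by
    rw [Matrix.mul_add, Matrix.mul_one, ← Matrix.mul_assoc, ← Matrix.mul_assoc,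
      mul_nonsing_inv P hP, Matrix.one_mul]
  rw [this, det_mul, det_one_add_mul_comm, ← Matrix.mul_assoc]

theorem one_le_det_of_one_le {M : Matrix n n ℝ} (hM : 1 ≤ M) : 1 ≤ M.det := by
  have hMh : M.IsHermitian := by
    simpa using (le_iff.mp hM).isHermitian.add isHermitian_one
  rw [hMh.det_eq_prod_eigenvalues]
  exact Finset.one_le_prod fun i _ =>
    (CFC.one_le_iff M hMh.isSelfAdjoint).mp hM _ (hMh.eigenvalues_mem_spectrum_real i)

theorem PosDef.det_le_det_of_le {P Q : Matrix n n ℝ} (hP : P.PosDef) (hPQ : P ≤ Q) :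
    P.det ≤ Q.det := by
  set W := CFC.sqrt (Q - P)
  have hQ : Q = P + W * W := by
    rw [CFC.sqrt_mul_sqrt_self _ (sub_nonneg.mpr hPQ), add_sub_cancel]
  have hWPW : 0 ≤ W * P⁻¹ * W :=
    conjugate_nonneg_of_nonneg hP.inv.posSemidef.nonneg (CFC.sqrt_nonneg _)
  have hdet := one_le_det_of_one_le (le_add_of_nonneg_right hWPW)
  rw [hQ, det_add_mul_self hP.det_pos.ne'.isUnit W]
  nlinarith [hP.det_pos]

theorem PosDef.inv_le_inv_of_le {𝕜 : Type*} [RCLike 𝕜] {P Q : Matrix n n 𝕜} (hP : P.PosDef)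
    (hPQ : P ≤ Q) : Q⁻¹ ≤ P⁻¹ := by
  set S := Q - P
  have hS : 0 ≤ S := sub_nonneg.mpr hPQ
  have hQ : Q.PosDef := by simpa [S] using hP.add_posSemidef (nonneg_iff_posSemidef.mp hS)
  have hPu : IsUnit P.det := (isUnit_iff_isUnit_det P).mp hP.isUnit
  have hQu : IsUnit Q.det := (isUnit_iff_isUnit_det Q).mp hQ.isUnit
  have hdiff : P⁻¹ - Q⁻¹ = Q⁻¹ * (S + S * P⁻¹ * S) * Q⁻¹ := calc
    P⁻¹ - Q⁻¹ = Q⁻¹ * S * P⁻¹ := by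
      rw [Matrix.mul_sub, Matrix.sub_mul, nonsing_inv_mul Q hQu, Matrix.one_mul,
        Matrix.mul_assoc, mul_nonsing_inv P hPu, Matrix.mul_one]
    _ = Q⁻¹ * (S * P⁻¹ * (P + S)) * Q⁻¹ := by
      rw [add_sub_cancel]
      simp only [Matrix.mul_assoc, mul_nonsing_inv Q hQu, Matrix.mul_one]
    _ = Q⁻¹ * (S + S * P⁻¹ * S) * Q⁻¹ := by
      rw [Matrix.mul_add, Matrix.mul_assoc S, nonsing_inv_mul P hPu, Matrix.mul_one]
  rw [← sub_nonneg, hdiff]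
  exact conjugate_nonneg_of_nonneg
    (add_nonneg hS (conjugate_nonneg_of_nonneg hP.inv.posSemidef.nonneg hS))
    hQ.inv.posSemidef.nonneg

end Matrix

theorem stmt18_general (n : ℕ) (A C S : Matrix (Fin n) (Fin n) ℝ)
    (hA : A.PosDef) (hC : C.PosSemidef) (hS : S.PosSemidef) :
    (A + C + S).det * A.det ≤ (A + S).det * (A + C).det := by
  set T := A + S
  have hT : T.PosDef := hA.add_posSemidef hS
  set W := CFC.sqrt C
  have hW : 0 ≤ W := CFC.sqrt_nonneg C
  have hC_eq : C = W * W := (CFC.sqrt_mul_sqrt_self C hC.nonneg).symm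
  have hinv : W * T⁻¹ * W ≤ W * A⁻¹ * W :=
    conjugate_le_conjugate_of_nonneg (hA.inv_le_inv_of_le (le_add_of_nonneg_right hS.nonneg)) hW
  have hWTW : 0 ≤ W * T⁻¹ * W := conjugate_nonneg_of_nonneg hT.inv.posSemidef.nonneg hW
  have hdet : (1 + W * T⁻¹ * W).det ≤ (1 + W * A⁻¹ * W).det :=
    (PosDef.one.add_posSemidef (nonneg_iff_posSemidef.mp hWTW)).det_le_det_of_le (by gcongr)
  rw [add_right_comm, hC_eq, det_add_mul_self hT.det_pos.ne'.isUnit,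
    det_add_mul_self hA.det_pos.ne'.isUnit]
  calc T.det * (1 + W * T⁻¹ * W).det * A.det
      ≤ T.det * (1 + W * A⁻¹ * W).det * A.det := by gcongr; exacts [hA.det_pos.le, hT.det_pos.le]
    _ = T.det * (A.det * (1 + W * A⁻¹ * W).det) := by ring

/-- Determinant submodularity-type inequality: for `A ≻ 0`, `C ⪰ 0`, `S ⪰ 0`,
`det(A + C + S) · det A ≤ det(A + S) · det(A + C)`. -/
theorem stmt18 (n : ℕ) (A C S : Matrix (Fin n) (Fin n) ℝ)
    (hA_symm : A.IsSymm) (hC_symm : C.IsSymm) (hS_symm : S.IsSymm)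
    (hA : A.PosDef) (hC : C.PosSemidef) (hS : S.PosSemidef) :
    (A + C + S).det * A.det ≤ (A + S).det * (A + C).det :=
  stmt18_general n A C S hA hC hS
end
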